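/- (OSSS inequality) Let f : {−1,1}^n → {−1,1} be computable by a decision tree of size s with s ≥ 2. Then max_{i ∈ [n]} Inf_i(f) ≥ Var(f) / (2 log₂ s), where Var(f) denotes the variance of the random variable f(x) for x uniform on {−1,1}^n. -/

import Mathlib

/-!
Decision trees over {-1,1}^n, where a point of the cube is encoded as `x : Fin n → Bool`
(`true` encodes 1, `false` encodes -1).
-/

/-- Decision trees with values in `Y` over `n` boolean variables. -/
inductive DTree (Y : Type) (n : ℕ) : Type
  | leaf : Y → DTree Y n
  | node : Fin n → DTree Y n → DTree Y n → DTree Y n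

namespace DTree

variable {Y : Type} {n : ℕ}

/-- The function computed by a decision tree: at a node labeled `i`, follow the right
subtree if `x_i = 1` (`x i = true`) and the left subtree if `x_i = -1` (`x i = false`). -/
def eval : DTree Y n → (Fin n → Bool) → Y
  | .leaf y, _ => y
  | .node i l r, x => if x i then r.eval x else l.eval x

/-- The size of a decision tree is its number of leaves. -/
def size : DTree Y n → ℕ
  | .leaf _ => 1
  | .node _ l r => l.size + r.size

end DTree

/-- The ±1 real value encoded by a boolean: `true ↦ 1`, `false ↦ -1`. -/
noncomputable def bval (b : Bool) : ℝ := if b then 1 else -1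

/-- The influence of variable `i` on `f`: `Pr[f(x) ≠ f(x^{~i})]`, where `x` is uniform and
`x^{~i}` is `x` with its `i`-th coordinate rerandomized. -/
noncomputable def infl {n : ℕ} (f : (Fin n → Bool) → Bool) (i : Fin n) : ℝ :=
  (∑ x : Fin n → Bool,
      ((if f x = f (Function.update x i true) then (0 : ℝ) else 1) +
        (if f x = f (Function.update x i false) then (0 : ℝ) else 1)) / 2) / 2 ^ n


/-!
Work with an arbitrary real function `f` on the cube and a tree whose leaf values lie in
`[-1, 1]`, and show `cov f T ≤ M log₂ (size T)` whenever every L¹ influence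
`𝔼 |f - E_i f|` is at most `M`, where `E_i` averages out coordinate `i`. At a root querying
`i`, replacing `f` by `E_i f` changes the covariance by at most the L¹ influence of `i`; as
`E_i f` ignores `x_i`, the covariance then becomes the mean of the covariances with the two
subtrees restricted at `x_i`, and `E_i` does not increase any L¹ influence. The induction
closes by `2 + log₂ a + log₂ b ≤ 2 log₂ (a + b)`. For `f = T` the covariance is the variance
and the L¹ influence of a ±1-valued function is twice its influence.
-/

open Finset Function
open scoped BigOperators

namespace BooleanCube

variable {ι : Type*} [DecidableEq ι]

noncomputable def expectCoord (i : ι) (f : (ι → Bool) → ℝ) (x : ι → Bool) : ℝ :=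
  (f (update x i false) + f (update x i true)) / 2

lemma expectCoord_update (i : ι) (f : (ι → Bool) → ℝ) (x : ι → Bool) (b : Bool) :
    expectCoord i f (update x i b) = expectCoord i f x := by
  simp only [expectCoord, update_idem]

lemma expectCoord_comm (i j : ι) (f : (ι → Bool) → ℝ) :
    expectCoord i (expectCoord j f) = expectCoord j (expectCoord i f) := by
  obtain rfl | hij := eq_or_ne i j
  · rfl
  funext x
  simp only [expectCoord, update_comm hij]
  ring

lemma expectCoord_sub (i : ι) (f g : (ι → Bool) → ℝ) :
    expectCoord i (f - g) = expectCoord i f - expectCoord i g := by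
  funext x
  simp only [expectCoord, Pi.sub_apply]
  ring

lemma abs_expectCoord_le (i : ι) (f : (ι → Bool) → ℝ) (x : ι → Bool) :
    |expectCoord i f x| ≤ expectCoord i (fun y => |f y|) x := by
  rw [expectCoord, expectCoord, abs_div, abs_two]
  gcongr
  exact abs_add_le _ _

variable [Fintype ι]

lemma expect_expectCoord (i : ι) (f : (ι → Bool) → ℝ) :
    𝔼 x, expectCoord i f x = 𝔼 x, f x := by
  set σ : (ι → Bool) → (ι → Bool) := fun x => update x i (!x i)
  have hσ : Involutive σ := fun x => by simp [σ]
  have hpair : ∀ x, expectCoord i f x = (f x + f (σ x)) / 2 := by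
    intro x
    have hself := update_eq_self i x
    cases hx : x i <;> rw [hx] at hself <;> simp [expectCoord, σ, hx, hself, add_comm]
  have hflip : 𝔼 x, f (σ x) = 𝔼 x, f x :=
    Fintype.expect_bijective σ hσ.bijective _ _ fun _ => rfl
  simp_rw [hpair, ← expect_div, expect_add_distrib, hflip]
  ring

noncomputable def l1Influence (f : (ι → Bool) → ℝ) (i : ι) : ℝ :=
  𝔼 x, |f x - expectCoord i f x|

lemma l1Influence_nonneg (f : (ι → Bool) → ℝ) (i : ι) : 0 ≤ l1Influence f i :=
  expect_nonneg fun _ _ => abs_nonneg _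

lemma l1Influence_expectCoord_le (f : (ι → Bool) → ℝ) (i j : ι) :
    l1Influence (expectCoord i f) j ≤ l1Influence f j := by
  have hcomm : expectCoord i f - expectCoord j (expectCoord i f)
      = expectCoord i (f - expectCoord j f) := by
    rw [expectCoord_comm j i, expectCoord_sub]
  calc l1Influence (expectCoord i f) j
      = 𝔼 x, |expectCoord i (f - expectCoord j f) x| := by
        simp only [l1Influence, ← hcomm, Pi.sub_apply]
    _ ≤ 𝔼 x, expectCoord i (fun y => |f y - expectCoord j f y|) x :=
        expect_le_expect fun x _ => abs_expectCoord_le i _ x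
    _ = l1Influence f j := expect_expectCoord i _

lemma expect_mul_sub_expectCoord_le (f G : (ι → Bool) → ℝ) (hG : ∀ x, |G x| ≤ 1) (i : ι) :
    𝔼 x, (f x - expectCoord i f x) * G x ≤ l1Influence f i := by
  refine expect_le_expect fun x _ => ?_
  calc (f x - expectCoord i f x) * G x
      ≤ |f x - expectCoord i f x| * |G x| := by rw [← abs_mul]; exact le_abs_self _
    _ ≤ |f x - expectCoord i f x| := mul_le_of_le_one_right (abs_nonneg _) (hG x)

noncomputable def cov (f g : (ι → Bool) → ℝ) : ℝ :=
  𝔼 x, f x * g x - (𝔼 x, f x) * 𝔼 x, g x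

lemma cov_const_right (f : (ι → Bool) → ℝ) (c : ℝ) : cov f (fun _ => c) = 0 := by
  rw [cov, Fintype.expect_const, expect_mul, sub_self]

lemma cov_le_cov_expectCoord_add (f G : (ι → Bool) → ℝ) (hG : ∀ x, |G x| ≤ 1) (i : ι) :
    cov f G ≤ cov (expectCoord i f) G + l1Influence f i := by
  have hdiff : cov f G - cov (expectCoord i f) G = 𝔼 x, (f x - expectCoord i f x) * G x := by
    simp only [cov, expect_expectCoord, sub_mul, expect_sub_distrib]
    ring
  linarith [expect_mul_sub_expectCoord_le f G hG i]

end BooleanCube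

namespace DTree

variable {Y : Type} {n : ℕ}

def restrict : DTree Y n → Fin n → Bool → DTree Y n
  | .leaf y, _, _ => .leaf y
  | .node j l r, i, b =>
      if j = i then (if b then r.restrict i b else l.restrict i b)
      else .node j (l.restrict i b) (r.restrict i b)

@[simp]
lemma restrict_node_self_false (i : Fin n) (l r : DTree Y n) :
    (node i l r).restrict i false = l.restrict i false := by
  simp [restrict]

@[simp]
lemma restrict_node_self_true (i : Fin n) (l r : DTree Y n) :
    (node i l r).restrict i true = r.restrict i true := by
  simp [restrict]

lemma eval_restrict (T : DTree Y n) (i : Fin n) (b : Bool) (x : Fin n → Bool) :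
    (T.restrict i b).eval x = T.eval (update x i b) := by
  induction T with
  | leaf y => rfl
  | node j l r ihl ihr =>
    obtain rfl | hji := eq_or_ne j i
    · cases b <;> simp [eval, ihl, ihr]
    · simp [restrict, eval, hji, ihl, ihr]

lemma one_le_size (T : DTree Y n) : 1 ≤ T.size := by
  induction T with
  | leaf y => exact le_rfl
  | node j l r ihl ihr => simp only [size]; omega

lemma size_restrict_le (T : DTree Y n) (i : Fin n) (b : Bool) : (T.restrict i b).size ≤ T.size := by
  induction T with
  | leaf y => exact le_rfl
  | node j l r ihl ihr =>
    have := l.one_le_size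
    have := r.one_le_size
    by_cases hji : j = i <;> cases b <;> simp [restrict, size, hji] <;> omega

end DTree

namespace BooleanCube

variable {Y : Type} {n : ℕ}

lemma expect_mul_eval_eq_avg_restrict (T : DTree Y n) (φ : Y → ℝ) (i : Fin n)
    (g : (Fin n → Bool) → ℝ) (hg : ∀ x b, g (update x i b) = g x) :
    𝔼 x, g x * φ (T.eval x) = (𝔼 x, g x * φ ((T.restrict i false).eval x)
      + 𝔼 x, g x * φ ((T.restrict i true).eval x)) / 2 := by
  rw [← expect_expectCoord i]
  simp only [expectCoord, hg, DTree.eval_restrict, ← expect_add_distrib, expect_div]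

lemma cov_eq_avg_restrict (T : DTree Y n) (φ : Y → ℝ) (i : Fin n)
    (g : (Fin n → Bool) → ℝ) (hg : ∀ x b, g (update x i b) = g x) :
    cov g (fun x => φ (T.eval x)) = (cov g (fun x => φ ((T.restrict i false).eval x))
      + cov g (fun x => φ ((T.restrict i true).eval x))) / 2 := by
  have hT := expect_mul_eval_eq_avg_restrict T φ i (fun _ => 1) fun _ _ => rfl
  simp only [one_mul] at hT
  simp only [cov, hT, expect_mul_eval_eq_avg_restrict T φ i g hg]
  ring

lemma two_add_logb_add_logb_le {a b : ℝ} (ha : 0 < a) (hb : 0 < b) :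
    2 + Real.logb 2 a + Real.logb 2 b ≤ 2 * Real.logb 2 (a + b) := by
  have hamgm : 2 ^ 2 * (a * b) ≤ (a + b) ^ 2 := by nlinarith [sq_nonneg (a - b)]
  have := Real.logb_le_logb_of_le one_lt_two (by positivity) hamgm
  rw [Real.logb_mul (by positivity) (by positivity), Real.logb_mul ha.ne' hb.ne',
    Real.logb_pow, Real.logb_pow, Real.logb_self_eq_one one_lt_two] at this
  push_cast at this
  linarith

theorem cov_le_mul_logb_size (φ : Y → ℝ) (hφ : ∀ y, |φ y| ≤ 1) {M : ℝ} :
    ∀ (T : DTree Y n) (f : (Fin n → Bool) → ℝ), (∀ j, l1Influence f j ≤ M) →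
      cov f (fun x => φ (T.eval x)) ≤ M * Real.logb 2 T.size
  | .leaf y, f, _ => by simp [DTree.eval, DTree.size, cov_const_right]
  | .node i L R, f, hf => by
    set g := expectCoord i f
    have hg : ∀ j, l1Influence g j ≤ M :=
      fun j => (l1Influence_expectCoord_le f i j).trans (hf j)
    have hM : 0 ≤ M := (l1Influence_nonneg f i).trans (hf i)
    have hL := cov_le_mul_logb_size φ hφ (L.restrict i false) g hg
    have hR := cov_le_mul_logb_size φ hφ (R.restrict i true) g hg
    have hLsize : Real.logb 2 (L.restrict i false).size ≤ Real.logb 2 L.size :=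
      Real.logb_le_logb_of_le one_lt_two (by exact_mod_cast DTree.one_le_size _)
        (by exact_mod_cast DTree.size_restrict_le L i false)
    have hRsize : Real.logb 2 (R.restrict i true).size ≤ Real.logb 2 R.size :=
      Real.logb_le_logb_of_le one_lt_two (by exact_mod_cast DTree.one_le_size _)
        (by exact_mod_cast DTree.size_restrict_le R i true)
    have hlog := two_add_logb_add_logb_le (a := L.size) (b := R.size)
      (by exact_mod_cast L.one_le_size) (by exact_mod_cast R.one_le_size)
    calc cov f (fun x => φ ((DTree.node i L R).eval x))
        ≤ cov g (fun x => φ ((DTree.node i L R).eval x)) + l1Influence f i :=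
          cov_le_cov_expectCoord_add f _ (fun _ => hφ _) i
      _ = (cov g (fun x => φ ((L.restrict i false).eval x))
            + cov g (fun x => φ ((R.restrict i true).eval x))) / 2 + l1Influence f i := by
          rw [cov_eq_avg_restrict _ φ i g (expectCoord_update i f),
            DTree.restrict_node_self_false, DTree.restrict_node_self_true]
      _ ≤ (M * Real.logb 2 L.size + M * Real.logb 2 R.size) / 2 + M := by
          gcongr
          · exact hL.trans (mul_le_mul_of_nonneg_left hLsize hM)
          · exact hR.trans (mul_le_mul_of_nonneg_left hRsize hM)
          · exact hf i
      _ ≤ M * Real.logb 2 (DTree.node i L R).size := by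
          push_cast [DTree.size]
          nlinarith
termination_by T => T.size
decreasing_by
  all_goals
    have := L.size_restrict_le i false
    have := R.size_restrict_le i true
    have := L.one_le_size
    have := R.one_le_size
    simp only [DTree.size]
    omega

lemma expect_eq_sum_div_two_pow (u : (Fin n → Bool) → ℝ) :
    𝔼 x, u x = (∑ x, u x) / 2 ^ n := by
  simp [Fintype.expect_eq_sum_div_card]

lemma abs_bval_le (b : Bool) : |bval b| ≤ 1 := by
  cases b <;> norm_num [bval]

lemma l1Influence_bval_comp (f : (Fin n → Bool) → Bool) (i : Fin n) :
    l1Influence (fun x => bval (f x)) i = 2 * infl f i := by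
  have hpoint : ∀ x, |bval (f x) - expectCoord i (fun y => bval (f y)) x|
      = (if f x = f (update x i true) then 0 else 1)
        + (if f x = f (update x i false) then 0 else 1) := by
    intro x
    have hself := update_eq_self i x
    cases hx : x i <;> rw [hx] at hself <;> simp only [expectCoord, hself] <;>
      cases f x <;> cases f (update x i true) <;> cases f (update x i false) <;> norm_num [bval]
  rw [l1Influence, infl, ← expect_eq_sum_div_two_pow, ← expect_div]
  simp only [hpoint]
  ring

end BooleanCube

open BooleanCube

/-- **OSSS inequality.** If `f : {-1,1}^n → {-1,1}` is computable by a decision tree of size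
`s ≥ 2`, then `max_i Inf_i(f) ≥ Var(f) / (2 log₂ s)`, where
`Var(f) = E[f(x)²] − (E[f(x)])²` over uniform `x`. -/
theorem stmt2 {n : ℕ} (s : ℕ) (hs : 2 ≤ s)
    (f : (Fin n → Bool) → Bool) (T : DTree Bool n)
    (hsize : T.size = s) (hTf : ∀ x, T.eval x = f x) :
    ((∑ x : Fin n → Bool, bval (f x) ^ 2) / 2 ^ n
        - ((∑ x : Fin n → Bool, bval (f x)) / 2 ^ n) ^ 2) / (2 * Real.logb 2 s)
      ≤ ⨆ i : Fin n, infl f i := by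
  set M := ⨆ i : Fin n, infl f i
  have hinfl : ∀ i, l1Influence (fun x => bval (f x)) i ≤ 2 * M := fun i => by
    rw [l1Influence_bval_comp]
    exact mul_le_mul_of_nonneg_left (le_ciSup (Set.finite_range _).bddAbove i) zero_le_two
  have hcov := cov_le_mul_logb_size bval abs_bval_le T _ hinfl
  simp only [hTf, hsize] at hcov
  have hvar : (∑ x : Fin n → Bool, bval (f x) ^ 2) / 2 ^ n
      - ((∑ x : Fin n → Bool, bval (f x)) / 2 ^ n) ^ 2
      = cov (fun x => bval (f x)) (fun x => bval (f x)) := by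
    simp only [cov, ← expect_eq_sum_div_two_pow, sq]
  have hlog : 0 < Real.logb 2 s := Real.logb_pos one_lt_two (by exact_mod_cast hs)
  rw [hvar, div_le_iff₀ (by positivity)]
  linarith
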